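/- arXiv:1605.02678 — 3 statements merged into one kernel-verified Lean document; each statement's English description precedes it below -/
import Mathlib

section
/- Let R = k[x_1,...,x_n] with the S_n-action permuting variables, s_i the transposition (i, i+1), and B_i = R ⊗_{R^{s_i}} R. There is a short exact sequence of (R,R)-bimodules 0 → R → B_i → R_{s_i} → 0, where R maps in by 1 ↦ x_i⊗1 − 1⊗x_{i+1}, and R_{s_i} is R with right action twisted by s_i (m·r = m·(s_i r)). -/
/-!
Write `D f` for the divided difference `(f - s f) / (x_a - x_b)`; it is `s`-invariant, and so is
`f + D f · x_b = s f + D f · x_a`. Hence `f = (f + D f · x_b) - D f · x_b` with both coefficients in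
`R^s`, which lets one slide them across the tensor sign:
`f ⊗ g = (f · s g) ⊗ 1 + f · D g · (x_a ⊗ 1 - 1 ⊗ x_b)`.
So `f ⊗ g ↦ f · s g` and `f ⊗ g ↦ f · D g` are the coordinates of `B` in the left `R`-basis
`1 ⊗ 1, x_a ⊗ 1 - 1 ⊗ x_b`, and the sequence is exact, the first map being split by the second
coordinate since `D 1 = 0` and `D x_b = -1`.
-/

open TensorProduct MvPolynomial

section DividedDifference

variable {ι k : Type*} [CommRing k] [DecidableEq ι] (a b : ι)

theorem X_sub_X_dvd_sub_rename_swap (f : MvPolynomial ι k) :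
    (X a - X b) ∣ f - rename (Equiv.swap a b) f := by
  induction f using MvPolynomial.induction_on with
  | C c => simp
  | add p q hp hq =>
    rw [map_add, add_sub_add_comm]
    exact dvd_add hp hq
  | mul_X p i hp =>
    have hX : (X a - X b : MvPolynomial ι k) ∣ X i - X (Equiv.swap a b i) := by
      rcases eq_or_ne i a with rfl | hia
      · simp
      rcases eq_or_ne i b with rfl | hib
      · exact ⟨-1, by simp⟩
      · simp [Equiv.swap_apply_of_ne_of_ne hia hib]
    have hsplit : p * X i - rename (Equiv.swap a b) (p * X i) =
        (p - rename (Equiv.swap a b) p) * X i +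
          rename (Equiv.swap a b) p * (X i - X (Equiv.swap a b i)) := by
      rw [map_mul, rename_X]; ring
    rw [hsplit]
    exact dvd_add (hp.mul_right _) (hX.mul_left _)

/-- The divided difference operator `f ↦ (f - s f) / (X a - X b)`. -/
noncomputable def divDiff (f : MvPolynomial ι k) : MvPolynomial ι k :=
  (X_sub_X_dvd_sub_rename_swap a b f).choose

theorem X_sub_X_mul_divDiff (f : MvPolynomial ι k) :
    (X a - X b) * divDiff a b f = f - rename (Equiv.swap a b) f :=
  (X_sub_X_dvd_sub_rename_swap a b f).choose_spec.symm

variable {a b}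

theorem rename_swap_add_divDiff_mul_X (f : MvPolynomial ι k) :
    rename (Equiv.swap a b) f + divDiff a b f * X a = f + divDiff a b f * X b := by
  linear_combination X_sub_X_mul_divDiff a b f

variable [IsDomain k] (hab : a ≠ b)
include hab

theorem divDiff_eq_of_X_sub_X_mul {f c : MvPolynomial ι k}
    (h : (X a - X b) * c = f - rename (Equiv.swap a b) f) : divDiff a b f = c := by
  have hδ : (X a - X b : MvPolynomial ι k) ≠ 0 := sub_ne_zero.2 fun h => hab (X_injective h)
  exact mul_left_cancel₀ hδ ((X_sub_X_mul_divDiff a b f).trans h.symm)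

theorem divDiff_add (f g : MvPolynomial ι k) :
    divDiff a b (f + g) = divDiff a b f + divDiff a b g :=
  divDiff_eq_of_X_sub_X_mul hab <| by
    rw [mul_add, X_sub_X_mul_divDiff, X_sub_X_mul_divDiff, map_add]; ring

theorem divDiff_mul_of_rename_swap_eq {c : MvPolynomial ι k}
    (hc : rename (Equiv.swap a b) c = c) (f : MvPolynomial ι k) :
    divDiff a b (c * f) = c * divDiff a b f :=
  divDiff_eq_of_X_sub_X_mul hab <| by
    rw [mul_left_comm, X_sub_X_mul_divDiff, map_mul, hc]; ring

theorem divDiff_one : divDiff a b (1 : MvPolynomial ι k) = 0 :=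
  divDiff_eq_of_X_sub_X_mul hab <| by simp

theorem divDiff_X_right : divDiff a b (X b : MvPolynomial ι k) = -1 :=
  divDiff_eq_of_X_sub_X_mul hab <| by simp

theorem rename_swap_divDiff (f : MvPolynomial ι k) :
    rename (Equiv.swap a b) (divDiff a b f) = divDiff a b f := by
  refine (divDiff_eq_of_X_sub_X_mul hab ?_).symm
  -- the involution `rename (swap a b)` negates both sides of `X_sub_X_mul_divDiff`
  have h := congrArg (rename (Equiv.swap a b)) (X_sub_X_mul_divDiff a b f)
  have hss : ⇑(Equiv.swap a b) ∘ ⇑(Equiv.swap a b) = id := funext (Equiv.swap_apply_self a b)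
  simp only [map_mul, map_sub, rename_X, Equiv.swap_apply_left, Equiv.swap_apply_right,
    rename_rename, hss, rename_id, AlgHom.id_apply] at h
  linear_combination -h

theorem rename_swap_add_divDiff_mul_X_right (f : MvPolynomial ι k) :
    rename (Equiv.swap a b) (f + divDiff a b f * X b) = f + divDiff a b f * X b := by
  rw [map_add, map_mul, rename_swap_divDiff hab, rename_X, Equiv.swap_apply_right,
    rename_swap_add_divDiff_mul_X]

end DividedDifference

section FixedSubalgebra

variable {k R : Type*} [CommRing k] [CommRing R] [Algebra k R]

def AlgHom.toLinearMapOverFixed (s : R →ₐ[k] R) :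
    R →ₗ[AlgHom.equalizer s (AlgHom.id k R)] R where
  toFun := s
  map_add' := map_add s
  map_smul' c f := by
    change s (c * f) = c * s f
    rw [map_mul, c.2]
    rfl

variable {ι : Type*} [DecidableEq ι] {a b : ι} [IsDomain k] (hab : a ≠ b)

noncomputable def divDiffLinearMap :
    MvPolynomial ι k →ₗ[AlgHom.equalizer (rename (Equiv.swap a b))
      (AlgHom.id k (MvPolynomial ι k))] MvPolynomial ι k where
  toFun := divDiff a b
  map_add' := divDiff_add hab
  map_smul' c f := divDiff_mul_of_rename_swap_eq hab c.2 f

end FixedSubalgebra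

section TensorCoordinates

variable {A R : Type*} [CommRing A] [CommRing R] [Algebra A R]

noncomputable def TensorProduct.mulApplyRight (T : R →ₗ[A] R) : R ⊗[A] R →ₗ[R] R :=
  AlgebraTensorModule.lift (LinearMap.toSpanSingleton R _ T)

@[simp]
theorem TensorProduct.mulApplyRight_tmul (T : R →ₗ[A] R) (f g : R) :
    mulApplyRight T (f ⊗ₜ[A] g) = f * T g := by
  simp [mulApplyRight]

theorem TensorProduct.mulApplyRight_comp_toSpanSingleton {D : R →ₗ[A] R} {x y : R}
    (hD1 : D 1 = 0) (hDy : D y = -1) :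
    mulApplyRight D ∘ₗ LinearMap.toSpanSingleton R _ (x ⊗ₜ[A] 1 - 1 ⊗ₜ y) = LinearMap.id := by
  ext
  simp [hD1, hDy]

variable (σ D : R →ₗ[A] R) {x y : R}
  (hD : ∀ g, D g ∈ (algebraMap A R).range)
  (hmem : ∀ g, g + D g * y ∈ (algebraMap A R).range)
  (hσ : ∀ g, σ g + D g * x = g + D g * y)
include hD hmem hσ

theorem TensorProduct.tmul_eq_mul_tmul_one_add_smul (f g : R) :
    f ⊗ₜ[A] g = (f * σ g) ⊗ₜ 1 + (f * D g) • (x ⊗ₜ[A] 1 - 1 ⊗ₜ y) := by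
  obtain ⟨c, hc⟩ := hD g
  obtain ⟨d, hd⟩ := hmem g
  have hslide_c : (f * D g) ⊗ₜ[A] y = f ⊗ₜ (D g * y) := by
    rw [← hc, _root_.mul_comm, ← _root_.Algebra.smul_def, smul_tmul, _root_.Algebra.smul_def]
  have hslide_d : f ⊗ₜ[A] (g + D g * y) = (f * (g + D g * y)) ⊗ₜ 1 := by
    rw [← hd, Algebra.algebraMap_eq_smul_one, ← smul_tmul, ← Algebra.algebraMap_eq_smul_one,
      _root_.Algebra.smul_def, _root_.mul_comm]
  calc f ⊗ₜ[A] g = f ⊗ₜ (g + D g * y) - (f * D g) ⊗ₜ y := by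
        rw [hslide_c, ← tmul_sub, add_sub_cancel_right]
    _ = (f * σ g + f * D g * x) ⊗ₜ 1 - (f * D g) ⊗ₜ y := by
        rw [hslide_d, ← hσ]; ring_nf
    _ = _ := by
        rw [smul_sub, smul_tmul', smul_tmul', smul_eq_mul, smul_eq_mul, mul_one, add_tmul]
        abel

theorem TensorProduct.eq_mulApplyRight_smul_add (t : R ⊗[A] R) :
    t = mulApplyRight σ t • (1 ⊗ₜ[A] 1) + mulApplyRight D t • (x ⊗ₜ[A] 1 - 1 ⊗ₜ y) := by
  induction t using TensorProduct.induction_on with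
  | zero => simp
  | tmul f g =>
    rw [mulApplyRight_tmul, mulApplyRight_tmul, smul_tmul', smul_eq_mul, mul_one]
    exact tmul_eq_mul_tmul_one_add_smul σ D hD hmem hσ f g
  | add t u ht hu =>
    simp only [map_add, add_smul]
    conv_lhs => rw [ht, hu]
    abel

theorem TensorProduct.exact_toSpanSingleton_mulApplyRight (hD1 : D 1 = 0) (hDy : D y = -1) :
    Function.Exact (LinearMap.toSpanSingleton R _ (x ⊗ₜ[A] 1 - 1 ⊗ₜ y)) (mulApplyRight σ) := by
  have hσ1 : σ 1 = 1 := by simpa [hD1] using hσ 1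
  have hσy : σ y = x := by
    have h := hσ y
    rw [hDy] at h
    linear_combination h
  refine LinearMap.exact_of_comp_of_mem_range ?_ fun t ht => ⟨mulApplyRight D t, ?_⟩
  · ext
    simp [hσ1, hσy]
  · rw [LinearMap.toSpanSingleton_apply]
    conv_rhs => rw [eq_mulApplyRight_smul_add σ D hD hmem hσ t]
    rw [ht, zero_smul, zero_add]

end TensorCoordinates

theorem soergel_ses_general (k : Type*) [Field k] (n : ℕ)
    (a b : Fin n) (hab : (a : ℕ) + 1 = (b : ℕ))
    (A : Subalgebra k (MvPolynomial (Fin n) k))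
    (hA : A = AlgHom.equalizer
      (MvPolynomial.rename (R := k) (Equiv.swap a b)) (AlgHom.id k (MvPolynomial (Fin n) k))) :
    ∃ (φ : MvPolynomial (Fin n) k →ₗ[MvPolynomial (Fin n) k]
          (MvPolynomial (Fin n) k ⊗[A] MvPolynomial (Fin n) k))
      (ψ : (MvPolynomial (Fin n) k ⊗[A] MvPolynomial (Fin n) k) →ₗ[MvPolynomial (Fin n) k]
          MvPolynomial (Fin n) k),
      (∀ r : MvPolynomial (Fin n) k,
        φ r = ((r * MvPolynomial.X a) ⊗ₜ[A] (1 : MvPolynomial (Fin n) k)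
            : MvPolynomial (Fin n) k ⊗[A] MvPolynomial (Fin n) k)
          - r ⊗ₜ[A] MvPolynomial.X b) ∧
      (∀ f g : MvPolynomial (Fin n) k,
        ψ (f ⊗ₜ[A] g) = f * MvPolynomial.rename (Equiv.swap a b) g) ∧
      Function.Injective φ ∧ Function.Surjective ψ ∧ Function.Exact φ ψ := by
  subst hA
  have hne : a ≠ b := fun h => by simp [h] at hab
  have hD1 := divDiff_one (k := k) hne
  have hDb := divDiff_X_right (k := k) hne
  let σ := (rename (R := k) (Equiv.swap a b)).toLinearMapOverFixed
  let D := divDiffLinearMap (k := k) hne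
  refine ⟨LinearMap.toSpanSingleton _ _ (X a ⊗ₜ 1 - 1 ⊗ₜ X b), mulApplyRight σ,
    fun r => by simp [smul_sub, smul_tmul'], fun f g => mulApplyRight_tmul σ f g,
    LinearMap.injective_of_comp_eq_id _ _ (mulApplyRight_comp_toSpanSingleton (D := D) hD1 hDb),
    fun r => ⟨r ⊗ₜ 1, by simp [σ, AlgHom.toLinearMapOverFixed]⟩,
    exact_toSpanSingleton_mulApplyRight σ D (fun g => ⟨⟨_, rename_swap_divDiff hne g⟩, rfl⟩)
      (fun g => ⟨⟨_, rename_swap_add_divDiff_mul_X_right hne g⟩, rfl⟩)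
      rename_swap_add_divDiff_mul_X hD1 hDb⟩

/-- the short exact sequence of `(R,R)`-bimodules
`0 → R → B_i → R_{s_i} → 0`, where `R → B_i` is `1 ↦ x_i ⊗ 1 - 1 ⊗ x_{i+1}` and
`B_i → R_{s_i}` is `f ⊗ g ↦ f · s_i(g)` (the twisted right action being encoded by
the twist `s_i` in this formula). -/
theorem soergel_ses (k : Type*) [Field k] (hk : ringChar k ≠ 2) (n : ℕ)
    (a b : Fin n) (hab : (a : ℕ) + 1 = (b : ℕ))
    (A : Subalgebra k (MvPolynomial (Fin n) k))
    (hA : A = AlgHom.equalizer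
      (MvPolynomial.rename (R := k) (Equiv.swap a b)) (AlgHom.id k (MvPolynomial (Fin n) k))) :
    ∃ (φ : MvPolynomial (Fin n) k →ₗ[MvPolynomial (Fin n) k]
          (MvPolynomial (Fin n) k ⊗[A] MvPolynomial (Fin n) k))
      (ψ : (MvPolynomial (Fin n) k ⊗[A] MvPolynomial (Fin n) k) →ₗ[MvPolynomial (Fin n) k]
          MvPolynomial (Fin n) k),
      (∀ r : MvPolynomial (Fin n) k,
        φ r = ((r * MvPolynomial.X a) ⊗ₜ[A] (1 : MvPolynomial (Fin n) k)
            : MvPolynomial (Fin n) k ⊗[A] MvPolynomial (Fin n) k)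
          - r ⊗ₜ[A] MvPolynomial.X b) ∧
      (∀ f g : MvPolynomial (Fin n) k,
        ψ (f ⊗ₜ[A] g) = f * MvPolynomial.rename (Equiv.swap a b) g) ∧
      Function.Injective φ ∧ Function.Surjective ψ ∧ Function.Exact φ ψ :=
  soergel_ses_general k n a b hab A hA
end

section
/- In the algebra A_n^! (path algebra of the An-type doubled quiver modulo (i|i−1|i) = (i|i+1|i) and (1|0|1) = 0), the element c = Σ_{i=2}^{n} (i|i−1|i) satisfies c^n = 0 but c^{n−1} ≠ 0. -/
/-- Generators for the path algebra of the doubled A_n quiver: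
idempotents `vert i` at the vertices, arrows `up i : i → i+1` and `down i : i+1 → i`
(0-indexed). -/
inductive PathGen (n : ℕ)
  | vert : Fin n → PathGen n
  | up : Fin (n - 1) → PathGen n
  | down : Fin (n - 1) → PathGen n

/-- Source vertex of the `i`-th pair of arrows. -/
def PathGen.src {n : ℕ} (i : Fin (n - 1)) : Fin n := ⟨i.1, by have := i.2; omega⟩

/-- Target vertex of the `i`-th pair of arrows. -/
def PathGen.tgt {n : ℕ} (i : Fin (n - 1)) : Fin n := ⟨i.1 + 1, by have := i.2; omega⟩

/-- Relations presenting `A_n^!`: the path-algebra relations (orthogonal idempotents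
summing to `1`, arrows composable only through their endpoints) together with the
relations `(i|i-1|i) = (i|i+1|i)` for `i = 1,…,n-1`, where `(1|0|1) = 0`.
Products are written in composition order (rightmost factor acts first). -/
inductive PathRel (k : Type*) [Field k] (n : ℕ) :
    FreeAlgebra k (PathGen n) → FreeAlgebra k (PathGen n) → Prop
  | mul_vert (a b : Fin n) :
      PathRel k n (FreeAlgebra.ι k (PathGen.vert a) * FreeAlgebra.ι k (PathGen.vert b))
        (if a = b then FreeAlgebra.ι k (PathGen.vert a) else 0)
  | sum_vert :
      PathRel k n (∑ a : Fin n, FreeAlgebra.ι k (PathGen.vert a)) 1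
  | up_src (i : Fin (n - 1)) :
      PathRel k n (FreeAlgebra.ι k (PathGen.up i) * FreeAlgebra.ι k (PathGen.vert (PathGen.src i)))
        (FreeAlgebra.ι k (PathGen.up i))
  | tgt_up (i : Fin (n - 1)) :
      PathRel k n (FreeAlgebra.ι k (PathGen.vert (PathGen.tgt i)) * FreeAlgebra.ι k (PathGen.up i))
        (FreeAlgebra.ι k (PathGen.up i))
  | down_tgt (i : Fin (n - 1)) :
      PathRel k n (FreeAlgebra.ι k (PathGen.down i) * FreeAlgebra.ι k (PathGen.vert (PathGen.tgt i)))
        (FreeAlgebra.ι k (PathGen.down i))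
  | src_down (i : Fin (n - 1)) :
      PathRel k n (FreeAlgebra.ι k (PathGen.vert (PathGen.src i)) * FreeAlgebra.ι k (PathGen.down i))
        (FreeAlgebra.ι k (PathGen.down i))
  | loop_first (i : Fin (n - 1)) (h : (i : ℕ) = 0) :
      PathRel k n (FreeAlgebra.ι k (PathGen.down i) * FreeAlgebra.ι k (PathGen.up i)) 0
  | loop_eq (i j : Fin (n - 1)) (h : (j : ℕ) = (i : ℕ) + 1) :
      PathRel k n (FreeAlgebra.ι k (PathGen.up i) * FreeAlgebra.ι k (PathGen.down i))
        (FreeAlgebra.ι k (PathGen.down j) * FreeAlgebra.ι k (PathGen.up j))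

/-- The algebra `A_n^!`. -/
abbrev PathAlg (k : Type*) [Field k] (n : ℕ) := RingQuot (PathRel k n)

/-- The element `c = (2|1|2) + (3|2|3) + ⋯ + (n|n-1|n)`. -/
noncomputable def cElt (k : Type*) [Field k] (n : ℕ) : PathAlg k n :=
  ∑ i : Fin (n - 1),
    RingQuot.mkAlgHom k (PathRel k n) (FreeAlgebra.ι k (PathGen.up i)) *
      RingQuot.mkAlgHom k (PathRel k n) (FreeAlgebra.ι k (PathGen.down i))

/-!
Write `X_j = (j|j-1|j)` for `2 ≤ j ≤ n`, so that `c = Σ X_j`. Paths through different vertices do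
not compose, so the `X_j` are pairwise orthogonal and `c^m = Σ X_j^m` for `m ≥ 1`. Moreover
`X_j^{m+1} = (j|j-1) (j-1|j|j-1)^m (j-1|j)`, and the defining relation turns `(j-1|j|j-1)` into
`X_{j-1}` (into `0` when `j = 2`), so `X_j^j = 0` by induction on `j`; hence `c^n = 0`.

For `c^{n-1} ≠ 0`, let `A_n^!` act on functions of a vertex and a degree `l ∈ ℕ`, the arrows
moving degrees so that `c` acts at vertex `n` as the degree-raising shift on degrees
`0, …, n - 2`; then `c^{n-1}` does not kill the delta function in degree `0` at vertex `n`.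
-/

section IndicatorCompOp

variable (R : Type*) {σ : Type*} [Semiring R]

noncomputable def indicatorCompOp (s : Set σ) (g : σ → σ) : Module.End R (σ → R) where
  toFun f := s.indicator (f ∘ g)
  map_add' _ _ := Set.indicator_add s _ _
  map_smul' c _ := Set.indicator_const_smul s c _

variable {R} {s t : Set σ} {g h : σ → σ}

@[simp]
lemma indicatorCompOp_apply (f : σ → R) :
    indicatorCompOp R s g f = s.indicator (f ∘ g) := rfl

lemma indicatorCompOp_mul :
    indicatorCompOp R s g * indicatorCompOp R t h = indicatorCompOp R (s ∩ g ⁻¹' t) (h ∘ g) := by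
  ext f : 1
  have hcomp : t.indicator (f ∘ h) ∘ g = (g ⁻¹' t).indicator (f ∘ h ∘ g) :=
    funext fun _ => (Set.indicator_comp_right g).symm
  simp [hcomp, Set.indicator_indicator]

lemma indicatorCompOp_congr (hst : s = t) (hgh : Set.EqOn g h s) :
    indicatorCompOp R s g = indicatorCompOp R t h := by
  subst hst
  ext f : 1
  exact Set.indicator_congr fun p hp => congrArg f (hgh hp)

lemma indicatorCompOp_empty : indicatorCompOp R (∅ : Set σ) g = 0 := by
  ext f : 1
  exact Set.indicator_empty _

end IndicatorCompOp

theorem Finset.sum_pow_succ_of_pairwise_mul_eq_zero {ι R : Type*} [Semiring R] (s : Finset ι)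
    (x : ι → R) (hx : ∀ i ∈ s, ∀ j ∈ s, i ≠ j → x i * x j = 0) (m : ℕ) :
    (∑ i ∈ s, x i) ^ (m + 1) = ∑ i ∈ s, x i ^ (m + 1) := by
  induction m with
  | zero => simp
  | succ m ih =>
    rw [pow_succ, ih, Finset.sum_mul_sum]
    refine Finset.sum_congr rfl fun i hi => ?_
    rw [Finset.sum_eq_single_of_mem i hi fun j hj hji => by
      rw [pow_succ, mul_assoc, hx i hi j hj hji.symm, mul_zero], ← pow_succ]

namespace PathAlg

variable (k : Type*) [Field k] {n : ℕ}

noncomputable def vert (a : Fin n) : PathAlg k n :=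
  RingQuot.mkAlgHom k (PathRel k n) (FreeAlgebra.ι k (PathGen.vert a))

noncomputable def up (i : Fin (n - 1)) : PathAlg k n :=
  RingQuot.mkAlgHom k (PathRel k n) (FreeAlgebra.ι k (PathGen.up i))

noncomputable def down (i : Fin (n - 1)) : PathAlg k n :=
  RingQuot.mkAlgHom k (PathRel k n) (FreeAlgebra.ι k (PathGen.down i))

/-- The loop `(i+2|i+1|i+2)` in the 1-indexed notation of `cElt`. -/
noncomputable def loop (i : Fin (n - 1)) : PathAlg k n := up k i * down k i

variable {k}

lemma vert_mul_vert (a b : Fin n) :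
    vert k a * vert k b = if a = b then vert k a else 0 := by
  simpa [vert, apply_ite] using RingQuot.mkAlgHom_rel k (PathRel.mul_vert (k := k) a b)

lemma sum_vert : ∑ a, vert k a = (1 : PathAlg k n) := by
  simpa [vert] using RingQuot.mkAlgHom_rel k (PathRel.sum_vert (k := k) (n := n))

lemma vert_tgt_mul_up (i : Fin (n - 1)) : vert k (PathGen.tgt i) * up k i = up k i := by
  simpa [vert, up] using RingQuot.mkAlgHom_rel k (PathRel.tgt_up (k := k) i)

lemma down_mul_vert_tgt (i : Fin (n - 1)) : down k i * vert k (PathGen.tgt i) = down k i := by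
  simpa [vert, down] using RingQuot.mkAlgHom_rel k (PathRel.down_tgt (k := k) i)

lemma down_mul_up_of_val_eq_zero (i : Fin (n - 1)) (hi : (i : ℕ) = 0) :
    down k i * up k i = 0 := by
  simpa [up, down] using RingQuot.mkAlgHom_rel k (PathRel.loop_first (k := k) i hi)

lemma down_mul_up_eq_loop (i j : Fin (n - 1)) (hij : (j : ℕ) = i + 1) :
    down k j * up k j = loop k i := by
  simpa [up, down, loop] using (RingQuot.mkAlgHom_rel k (PathRel.loop_eq (k := k) i j hij)).symm

lemma down_mul_up_of_ne {i j : Fin (n - 1)} (hij : i ≠ j) : down k i * up k j = 0 := by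
  have htgt : PathGen.tgt i ≠ PathGen.tgt j := fun h =>
    hij (Fin.ext (by simpa [PathGen.tgt] using congrArg Fin.val h))
  calc down k i * up k j
      = (down k i * vert k (PathGen.tgt i)) * (vert k (PathGen.tgt j) * up k j) := by
        rw [down_mul_vert_tgt, vert_tgt_mul_up]
    _ = down k i * (vert k (PathGen.tgt i) * vert k (PathGen.tgt j)) * up k j := by
        simp only [mul_assoc]
    _ = 0 := by rw [vert_mul_vert, if_neg htgt, mul_zero, zero_mul]

lemma loop_mul_loop_of_ne {i j : Fin (n - 1)} (hij : i ≠ j) : loop k i * loop k j = 0 := by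
  rw [loop, loop, mul_assoc, ← mul_assoc (down k i), down_mul_up_of_ne hij, zero_mul, mul_zero]

lemma loop_pow_succ (i : Fin (n - 1)) (m : ℕ) :
    loop k i ^ (m + 1) = up k i * (down k i * up k i) ^ m * down k i := by
  induction m with
  | zero => simp [loop]
  | succ m ih => rw [pow_succ', ih, loop]; simp only [pow_succ', mul_assoc]

lemma loop_pow_val_add_two (i : Fin (n - 1)) : loop k i ^ ((i : ℕ) + 2) = 0 := by
  obtain ⟨i, hi⟩ := i
  induction i with
  | zero => rw [loop_pow_succ, pow_one, down_mul_up_of_val_eq_zero _ rfl, mul_zero, zero_mul]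
  | succ i ih =>
    rw [loop_pow_succ, down_mul_up_eq_loop ⟨i, by omega⟩ _ rfl, ih, mul_zero, zero_mul]

lemma cElt_eq_sum_loop : cElt k n = ∑ i, loop k i := rfl

lemma cElt_pow_succ (m : ℕ) : cElt k n ^ (m + 1) = ∑ i, loop k i ^ (m + 1) :=
  Finset.sum_pow_succ_of_pairwise_mul_eq_zero _ _
    (fun _ _ _ _ hij => loop_mul_loop_of_ne hij) m

theorem cElt_pow_self : cElt k n ^ n = 0 := by
  rcases n with _ | m
  · rw [pow_zero, ← sum_vert, Finset.univ_eq_empty, Finset.sum_empty]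
  rw [cElt_pow_succ]
  exact Finset.sum_eq_zero fun i _ =>
    pow_eq_zero_of_le (by have := i.2; omega) (loop_pow_val_add_two i)

variable (k) in
/-- Vertex `a` carries functions of a degree `l`; cutting `down i` off above degree `i` is what
makes the relations `(1|0|1) = 0` and `(i|i-1|i) = (i|i+1|i)` hold. -/
noncomputable def repGen : PathGen n → Module.End k (Fin n × ℕ → k)
  | .vert a => indicatorCompOp k {p | p.1 = a} id
  | .up i => indicatorCompOp k {p | p.1 = PathGen.tgt i ∧ 1 ≤ p.2}
      fun p => (PathGen.src i, p.2 - 1)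
  | .down i => indicatorCompOp k {p | p.1 = PathGen.src i ∧ p.2 ≤ i}
      fun p => (PathGen.tgt i, p.2)

lemma repGen_respects ⦃x y : FreeAlgebra k (PathGen n)⦄ (h : PathRel k n x y) :
    FreeAlgebra.lift k (repGen k) x = FreeAlgebra.lift k (repGen k) y := by
  induction h with
  | mul_vert a b =>
    simp only [map_mul, apply_ite, map_zero, FreeAlgebra.lift_ι_apply, repGen, indicatorCompOp_mul]
    split_ifs with hab
    · subst hab
      exact indicatorCompOp_congr (by ext; simp) fun _ _ => rfl
    · exact (indicatorCompOp_congr (by ext; simp; grind) fun _ _ => rfl).trans indicatorCompOp_empty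
  | sum_vert =>
    ext f ⟨a, l⟩
    rw [map_sum, map_one, LinearMap.coe_sum, Finset.sum_apply, Finset.sum_apply,
      Finset.sum_eq_single a (fun b _ hba => ?_) (by simp)]
    · simp [repGen]
    · simp [repGen, Ne.symm hba]
  | loop_first i hi =>
    simp only [map_mul, map_zero, FreeAlgebra.lift_ι_apply, repGen, indicatorCompOp_mul]
    exact (indicatorCompOp_congr (by ext; simp; omega) fun _ _ => rfl).trans indicatorCompOp_empty
  | loop_eq i j hij =>
    simp only [map_mul, FreeAlgebra.lift_ι_apply, repGen, indicatorCompOp_mul]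
    have : PathGen.tgt i = PathGen.src j := Fin.ext (by simp [PathGen.tgt, PathGen.src, hij])
    refine indicatorCompOp_congr ?_ fun p _ => by simp [this]
    ext ⟨a, l⟩
    simp [this]
    omega
  | _ =>
    simp only [map_mul, FreeAlgebra.lift_ι_apply, repGen, indicatorCompOp_mul]
    exact indicatorCompOp_congr (by ext; simp) fun _ _ => rfl

variable (k) in
noncomputable def rep : PathAlg k n →ₐ[k] Module.End k (Fin n × ℕ → k) :=
  RingQuot.liftAlgHom k ⟨FreeAlgebra.lift k (repGen k), repGen_respects⟩

lemma rep_loop (i : Fin (n - 1)) :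
    rep k (loop k i) = indicatorCompOp k {p | p.1 = PathGen.tgt i ∧ 1 ≤ p.2 ∧ p.2 ≤ (i : ℕ) + 1}
      fun p => (p.1, p.2 - 1) := by
  simp only [loop, up, down, map_mul, rep, RingQuot.liftAlgHom_mkAlgHom_apply,
    FreeAlgebra.lift_ι_apply, repGen, indicatorCompOp_mul]
  exact indicatorCompOp_congr (by ext; simp; omega) fun p hp => by simp [hp.1.1]

lemma rep_cElt_apply_of_val_add_one_eq (a : Fin n) (ha : (a : ℕ) + 1 = n)
    (f : Fin n × ℕ → k) {l : ℕ} (hl : 1 ≤ l) (hln : l < n) :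
    rep k (cElt k n) f (a, l) = f (a, l - 1) := by
  have hlast : ∀ j : Fin (n - 1), PathGen.tgt j = a ↔ (j : ℕ) = n - 2 := fun j => by
    simp [PathGen.tgt, Fin.ext_iff]; omega
  rw [cElt_eq_sum_loop, map_sum, LinearMap.coe_sum, Finset.sum_apply, Finset.sum_apply,
    Finset.sum_eq_single ⟨n - 2, by omega⟩ (fun j _ hj => ?_) (by simp)]
  · have : PathGen.tgt ⟨n - 2, by omega⟩ = a := (hlast _).2 rfl
    simp [rep_loop, this, Set.indicator, hl]
    omega
  · have : PathGen.tgt j ≠ a := fun h => hj (Fin.ext ((hlast j).1 h))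
    simp [rep_loop, Set.indicator, Ne.symm this]

lemma rep_cElt_pow_apply_of_val_add_one_eq (a : Fin n) (ha : (a : ℕ) + 1 = n)
    (f : Fin n × ℕ → k) {s l : ℕ} (hsl : s ≤ l) (hln : l < n) :
    (rep k (cElt k n) ^ s) f (a, l) = f (a, l - s) := by
  induction s generalizing l with
  | zero => simp
  | succ s ih =>
    rw [pow_succ', Module.End.mul_apply, rep_cElt_apply_of_val_add_one_eq a ha _ (by omega) hln,
      ih (by omega) (by omega), Nat.sub_sub, Nat.add_comm 1 s]

theorem cElt_pow_pred_ne_zero (hn : 0 < n) : cElt k n ^ (n - 1) ≠ 0 := by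
  intro h
  let a : Fin n := ⟨n - 1, by omega⟩
  have h0 := congrArg (fun x => rep k x (Pi.single (a, 0) 1) (a, n - 1)) h
  simp only [map_pow, map_zero, rep_cElt_pow_apply_of_val_add_one_eq a (by simp [a]; omega) _
    le_rfl (by omega : n - 1 < n), Nat.sub_self] at h0
  simp at h0

end PathAlg

/-- in `A_n^!` the element `c = Σ_{i=2}^{n} (i|i-1|i)` satisfies
`c^n = 0` but `c^{n-1} ≠ 0`. -/
theorem cElt_nilpotency (k : Type*) [Field k] (n : ℕ) (hn : 0 < n) :
    cElt k n ^ n = 0 ∧ cElt k n ^ (n - 1) ≠ 0 :=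
  ⟨PathAlg.cElt_pow_self, PathAlg.cElt_pow_pred_ne_zero hn⟩
end

section
/- Let R = k[x_1, x_2] and R^{S_2} the subring of symmetric polynomials, B = R ⊗_{R^{S_2}} R. Then B ⊗_R B is isomorphic as an (R,R)-bimodule to B ⊕ B. Explicitly, the map B ⊗_R B → B ⊕ B sending a⊗b⊗c ↦ (a·m(b)·c in first coordinate where m is multiplication composed appropriately, and a⊗∂(b)·c in the second, with ∂ the Demazure operator ∂(b) = (b − s_1 b)/(x_1 − x_2)) is an isomorphism of (R,R)-bimodules. -/
/-!
Write `x = X 0`. As `∂` is `R^{S₂}`-linear with `∂ 1 = 0` and `∂ x = 1`, the inverse is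
`(u, v) ↦ φ u + ψ v` with `φ (a ⊗ c) = (a ⊗ 1) ⊗ c` and `ψ (a ⊗ c) = (a ⊗ x - a x ⊗ 1) ⊗ c`:
writing `b = p + q x` with `p, q` symmetric gives `∂ b = q`, and the `ψ`-term turns
`(a b ⊗ 1) ⊗ c` back into `(a ⊗ b) ⊗ c`. So the argument only needs `1, x` to span `R` over
`R^{S₂}`, which follows from `f = (f - ∂f · x) + ∂f · x`: both coefficients are symmetric by the
identity `(x₁ - x₂) ∂f = f - s f`.
-/

open MvPolynomial TensorProduct

namespace Demazure

variable {S A : Type*} [CommRing S] [CommRing A] [Algebra S A]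

variable (S A) in
noncomputable def lmul : A ⊗[S] A →ₗ[A] A :=
  AlgebraTensorModule.lift ((LinearMap.mul A A).restrictScalars₁₂ A S)

noncomputable def splitMap (D : A →ₗ[S] A) :
    (A ⊗[S] A) ⊗[S] A →ₗ[A] (A ⊗[S] A) × (A ⊗[S] A) :=
  (AlgebraTensorModule.map (lmul S A) LinearMap.id).prod
    (AlgebraTensorModule.map LinearMap.id (TensorProduct.lift (LinearMap.mul S A ∘ₗ D)) ∘ₗ
      (AlgebraTensorModule.assoc S S A A A A).toLinearMap)

theorem splitMap_tmul (D : A →ₗ[S] A) (a b c : A) :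
    splitMap D ((a ⊗ₜ b) ⊗ₜ c) = ((a * b) ⊗ₜ c, a ⊗ₜ (D b * c)) := rfl

variable (S) in
noncomputable def joinMap (x : A) : (A ⊗[S] A) × (A ⊗[S] A) →ₗ[A] (A ⊗[S] A) ⊗[S] A :=
  (AlgebraTensorModule.map (LinearMap.toSpanSingleton A _ (1 ⊗ₜ 1)) LinearMap.id).coprod
    (AlgebraTensorModule.map (LinearMap.toSpanSingleton A _ (1 ⊗ₜ x - x ⊗ₜ 1)) LinearMap.id)

theorem joinMap_tmul (x a c a' c' : A) :
    joinMap S x (a ⊗ₜ c, a' ⊗ₜ c') = (a ⊗ₜ 1) ⊗ₜ c + (a' ⊗ₜ x - (a' * x) ⊗ₜ 1) ⊗ₜ c' := by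
  simp [joinMap, smul_tmul', smul_sub]

variable {D : A →ₗ[S] A} {x : A}

theorem splitMap_comp_joinMap (hD1 : D 1 = 0) (hDx : D x = 1) :
    splitMap D ∘ₗ joinMap S x = LinearMap.id := by
  refine LinearMap.prod_ext (AlgebraTensorModule.ext fun a c => ?_)
    (AlgebraTensorModule.ext fun a c => ?_)
  · simp [joinMap, smul_tmul', splitMap_tmul, hD1]
  · simp [joinMap, smul_sub, smul_tmul', splitMap_tmul, hD1, hDx, sub_tmul]

theorem joinMap_comp_splitMap (hD1 : D 1 = 0) (hDx : D x = 1)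
    (hspan : Submodule.span S {1, x} = ⊤) :
    joinMap S x ∘ₗ splitMap D = LinearMap.id := by
  refine LinearMap.restrictScalars_injective S (TensorProduct.ext_threefold fun a b c => ?_)
  obtain ⟨p, q, rfl⟩ :=
    Submodule.mem_span_pair.mp (hspan ▸ Submodule.mem_top : b ∈ Submodule.span S {1, x})
  have hDb : D (p • 1 + q • x) = algebraMap S A q := by
    simp [hD1, hDx, Algebra.algebraMap_eq_smul_one]
  rw [LinearMap.restrictScalars_apply, LinearMap.comp_apply, splitMap_tmul, hDb,
    ← Algebra.smul_def, joinMap_tmul, LinearMap.restrictScalars_apply, LinearMap.id_apply]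
  rw [mul_add, mul_smul_comm, mul_smul_comm, mul_one, ← smul_tmul, smul_sub, smul_tmul', smul_tmul',
    smul_tmul q a x, add_tmul, smul_tmul p a 1, tmul_add]
  simp only [add_tmul, sub_tmul]
  abel

noncomputable def tensorEquivProd (hD1 : D 1 = 0) (hDx : D x = 1)
    (hspan : Submodule.span S {1, x} = ⊤) :
    (A ⊗[S] A) ⊗[S] A ≃ₗ[A] (A ⊗[S] A) × (A ⊗[S] A) :=
  LinearEquiv.ofLinearMap (splitMap D) (joinMap S x) (splitMap_comp_joinMap hD1 hDx)
    (joinMap_comp_splitMap hD1 hDx hspan)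

theorem tensorEquivProd_tmul (hD1 : D 1 = 0) (hDx : D x = 1)
    (hspan : Submodule.span S {1, x} = ⊤) (a b c : A) :
    tensorEquivProd hD1 hDx hspan ((a ⊗ₜ b) ⊗ₜ c) = ((a * b) ⊗ₜ c, a ⊗ₜ (D b * c)) := rfl

end Demazure

namespace MvPolynomial

theorem mem_symmetricSubalgebra_fin_two_iff {R : Type*} [CommSemiring R]
    (f : MvPolynomial (Fin 2) R) :
    f ∈ symmetricSubalgebra (Fin 2) R ↔ rename (Equiv.swap 0 1) f = f := by
  refine ⟨fun h => h _, fun h σ => ?_⟩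
  have hσ : ∀ σ : Equiv.Perm (Fin 2), σ = 1 ∨ σ = Equiv.swap 0 1 := by decide
  rcases hσ σ with rfl | rfl
  · exact rename_id_apply f
  · exact h

variable {R : Type*} [CommRing R] [IsDomain R] {D : MvPolynomial (Fin 2) R → MvPolynomial (Fin 2) R}

theorem rename_swap_demazure (hD : ∀ f, (X 0 - X 1) * D f = f - rename (Equiv.swap 0 1) f)
    (f : MvPolynomial (Fin 2) R) : rename (Equiv.swap 0 1) (D f) = D f := by
  have hX : (X 0 - X 1 : MvPolynomial (Fin 2) R) ≠ 0 := sub_ne_zero.mpr (X_injective.ne (by decide))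
  refine mul_left_cancel₀ hX ?_
  have h := congrArg (rename (Equiv.swap 0 1)) (hD f)
  have hinv : Function.Involutive (Equiv.swap (0 : Fin 2) 1) := Equiv.swap_apply_self 0 1
  simp only [map_mul, map_sub, rename_X, Equiv.swap_apply_left, Equiv.swap_apply_right,
    rename_rename, hinv.comp_self, rename_id_apply] at h
  linear_combination -h - hD f

theorem span_one_X_zero_eq_top (hD : ∀ f, (X 0 - X 1) * D f = f - rename (Equiv.swap 0 1) f) :
    Submodule.span (symmetricSubalgebra (Fin 2) R) {1, (X 0 : MvPolynomial (Fin 2) R)} = ⊤ := by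
  refine Submodule.eq_top_iff'.mpr fun f => Submodule.mem_span_pair.mpr ?_
  have hq : D f ∈ symmetricSubalgebra (Fin 2) R :=
    (mem_symmetricSubalgebra_fin_two_iff _).mpr (rename_swap_demazure hD f)
  have hp : f - D f * X 0 ∈ symmetricSubalgebra (Fin 2) R := by
    rw [mem_symmetricSubalgebra_fin_two_iff]
    simp only [map_sub, map_mul, rename_swap_demazure hD f, rename_X, Equiv.swap_apply_left]
    linear_combination hD f
  refine ⟨⟨_, hp⟩, ⟨_, hq⟩, ?_⟩
  simp only [Subalgebra.smul_def, smul_eq_mul, mul_one]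
  ring

end MvPolynomial

theorem B_tensor_B_decomposition_general (k : Type*) [Field k]
    (D : MvPolynomial (Fin 2) k →ₗ[MvPolynomial.symmetricSubalgebra (Fin 2) k]
      MvPolynomial (Fin 2) k)
    (hD : ∀ b : MvPolynomial (Fin 2) k,
      (MvPolynomial.X 0 - MvPolynomial.X 1) * D b =
        b - MvPolynomial.rename (Equiv.swap (0 : Fin 2) 1) b)
    (hD1 : D 1 = 0) (hDx : D (MvPolynomial.X 0) = 1) :
    ∃ e : ((MvPolynomial (Fin 2) k ⊗[MvPolynomial.symmetricSubalgebra (Fin 2) k]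
            MvPolynomial (Fin 2) k) ⊗[MvPolynomial.symmetricSubalgebra (Fin 2) k]
            MvPolynomial (Fin 2) k)
          ≃ₗ[MvPolynomial (Fin 2) k]
          ((MvPolynomial (Fin 2) k ⊗[MvPolynomial.symmetricSubalgebra (Fin 2) k]
            MvPolynomial (Fin 2) k) ×
           (MvPolynomial (Fin 2) k ⊗[MvPolynomial.symmetricSubalgebra (Fin 2) k]
            MvPolynomial (Fin 2) k)),
      ∀ a b c : MvPolynomial (Fin 2) k,
        e ((a ⊗ₜ b) ⊗ₜ c) = ((a * b) ⊗ₜ c, a ⊗ₜ (D b * c)) :=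
  ⟨Demazure.tensorEquivProd hD1 hDx (MvPolynomial.span_one_X_zero_eq_top hD),
    Demazure.tensorEquivProd_tmul hD1 hDx _⟩

/-- for `R = k[x_1,x_2]`, `B = R ⊗_{R^{S_2}} R`, the map
`B ⊗_R B = R ⊗_{R^{S₂}} R ⊗_{R^{S₂}} R → B ⊕ B`,
`a⊗b⊗c ↦ ((a·b)⊗c, a⊗(∂b·c))`, is an isomorphism of `(R,R)`-bimodules,
where `∂` is the Demazure operator. -/
theorem B_tensor_B_decomposition (k : Type*) [Field k] (hk : ringChar k ≠ 2)
    (D : MvPolynomial (Fin 2) k →ₗ[MvPolynomial.symmetricSubalgebra (Fin 2) k]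
      MvPolynomial (Fin 2) k)
    (hD : ∀ b : MvPolynomial (Fin 2) k,
      (MvPolynomial.X 0 - MvPolynomial.X 1) * D b =
        b - MvPolynomial.rename (Equiv.swap (0 : Fin 2) 1) b)
    (hD1 : D 1 = 0) (hDx : D (MvPolynomial.X 0) = 1) :
    ∃ e : ((MvPolynomial (Fin 2) k ⊗[MvPolynomial.symmetricSubalgebra (Fin 2) k]
            MvPolynomial (Fin 2) k) ⊗[MvPolynomial.symmetricSubalgebra (Fin 2) k]
            MvPolynomial (Fin 2) k)
          ≃ₗ[MvPolynomial (Fin 2) k]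
          ((MvPolynomial (Fin 2) k ⊗[MvPolynomial.symmetricSubalgebra (Fin 2) k]
            MvPolynomial (Fin 2) k) ×
           (MvPolynomial (Fin 2) k ⊗[MvPolynomial.symmetricSubalgebra (Fin 2) k]
            MvPolynomial (Fin 2) k)),
      ∀ a b c : MvPolynomial (Fin 2) k,
        e ((a ⊗ₜ b) ⊗ₜ c) = ((a * b) ⊗ₜ c, a ⊗ₜ (D b * c)) :=
  B_tensor_B_decomposition_general k D hD hD1 hDx
end
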